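/- Conversely, any f that computes a list of all computable functions computes a function dominating every computable function; hence dom(REC) = list(REC). -/

import Mathlib

open Filter

namespace Paper

/-- Codes for oracle Turing machines (relativized partial recursive functions). -/
inductive OCode : Type
  | oracle : OCode
  | zero : OCode
  | succ : OCode
  | left : OCode
  | right : OCode
  | pair : OCode → OCode → OCode
  | comp : OCode → OCode → OCode
  | prec : OCode → OCode → OCode
  | rfind' : OCode → OCode

/-- Evaluation of an oracle code relative to an oracle `O`. -/
def evalo (O : ℕ →. ℕ) : OCode → ℕ →. ℕ
  | .oracle => O
  | .zero => fun _ => Part.some 0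
  | .succ => fun n => Part.some (n + 1)
  | .left => fun n => Part.some n.unpair.1
  | .right => fun n => Part.some n.unpair.2
  | .pair cf cg => fun n => Nat.pair <$> evalo O cf n <*> evalo O cg n
  | .comp cf cg => fun n => evalo O cg n >>= evalo O cf
  | .prec cf cg => Nat.unpaired fun a n =>
      n.rec (evalo O cf a) fun y IH => do
        let i ← IH
        evalo O cg (Nat.pair a (Nat.pair y i))
  | .rfind' cf => Nat.unpaired fun a m =>
      (Nat.rfind fun n => (fun x => x = 0) <$> evalo O cf (Nat.pair a (n + m))).map (· + m)

/-- Turing reducibility for total functions. -/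
def TRed (f g : ℕ → ℕ) : Prop := ∃ c : OCode, evalo (g : ℕ →. ℕ) c = (f : ℕ →. ℕ)

/-- `g` is a uniform modulus of computation for `f`. -/
def UniformModulus (g f : ℕ → ℕ) : Prop :=
  ∃ c : OCode, ∀ h : ℕ → ℕ, (∀ i, g i ≤ h i) → evalo (h : ℕ →. ℕ) c = (f : ℕ →. ℕ)

end Paper

/-!
Given a list `x ≤_T f`, the sum of `x` over all codes below `(i + 1) ^ 2` bounds every column
`n ≤ i` at `i`, hence dominates every computable function. Conversely, given a dominating
`d ≤_T f`, column `(c, s)` runs code `c` on input `j` for `d j + s` steps: some `s` makes the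
budget suffice everywhere for a total `c`, since `d` dominates its running time. Cutting a
column to `0` from the first input where the budget runs out makes every column computable,
whatever `d` is.
-/

open Nat.Partrec (Code)
open Nat.Partrec.Code (eval evaln evaln_complete evaln_mono evaln_sound exists_code)
open Nat.Partrec.Code (primrec_evaln)

theorem computable_of_forall_le_eq_zero {f : ℕ → ℕ} (k₀ : ℕ) (h : ∀ k, k₀ ≤ k → f k = 0) :
    Computable f :=
  ((Primrec.list_getD 0).comp (Primrec.const ((List.range k₀).map f)) Primrec.id).to_comp.of_eq
    fun k => by
      rcases lt_or_ge k k₀ with hk | hk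
      · simp [hk]
      · simp [h k hk, hk]

theorem Computable.nat_find {α : Type*} [Primcodable α] {p : α → ℕ → Bool} (hp : Computable₂ p)
    (h : ∀ a, ∃ n, p a n = true) : Computable fun a => Nat.find (h a) :=
  (Partrec.rfind hp.partrec₂).of_eq_tot fun a => Nat.mem_rfind.2
    ⟨by simpa using Nat.find_spec (h a), fun hm => by simpa using Nat.find_min (h a) hm⟩

theorem exists_le_add_of_eventually_le {r d : ℕ → ℕ} (h : ∀ᶠ i in atTop, r i ≤ d i) :
    ∃ s, ∀ i, r i ≤ d i + s := by
  obtain ⟨N, hN⟩ := eventually_atTop.1 h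
  refine ⟨∑ i ∈ Finset.range N, r i, fun i => ?_⟩
  rcases lt_or_ge i N with hi | hi
  · exact (Finset.single_le_sum (fun _ _ => Nat.zero_le _) (Finset.mem_range.2 hi)).trans
      (Nat.le_add_left _ _)
  · exact (hN i hi).trans (Nat.le_add_right _ _)

theorem Computable.exists_code_evaln_eq_some {g : ℕ → ℕ} (hg : Computable g) :
    ∃ (c : Code) (r : ℕ → ℕ), Computable r ∧ ∀ j t, r j ≤ t → evaln t c j = some (g j) := by
  obtain ⟨c, hc⟩ := exists_code.1 (Partrec.nat_iff.1 hg)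
  have hhalts : ∀ j, ∃ t, (evaln t c j).isSome := fun j => by
    obtain ⟨t, ht⟩ := evaln_complete.1 (by rw [hc]; exact Part.mem_some (g j))
    exact ⟨t, Option.isSome_iff_exists.2 ⟨_, ht⟩⟩
  have hp : Computable₂ fun j t => (evaln t c j).isSome :=
    (Primrec.option_isSome.comp <| primrec_evaln.comp <|
      (Primrec.snd.pair (Primrec.const c)).pair Primrec.fst).to_comp
  refine ⟨c, fun j => Nat.find (hhalts j), Computable.nat_find hp hhalts, fun j t ht => ?_⟩
  obtain ⟨v, hv⟩ := Option.isSome_iff_exists.1 (Nat.find_spec (hhalts j))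
  have hvg : v ∈ eval c j := evaln_sound hv
  rw [hc, PFun.coe_val, Part.mem_some_iff] at hvg
  exact hvg ▸ evaln_mono ht hv

namespace Paper

def OCode.ofCode : Code → OCode
  | .zero => .zero
  | .succ => .succ
  | .left => .left
  | .right => .right
  | .pair a b => .pair (ofCode a) (ofCode b)
  | .comp a b => .comp (ofCode a) (ofCode b)
  | .prec a b => .prec (ofCode a) (ofCode b)
  | .rfind' a => .rfind' (ofCode a)

theorem evalo_ofCode (O : ℕ →. ℕ) (c : Code) : evalo O (OCode.ofCode c) = c.eval := by
  induction c with
  | zero | succ | left | right => rfl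
  | pair a b iha ihb => simp only [OCode.ofCode, evalo, iha, ihb]; rfl
  | comp a b iha ihb => simp only [OCode.ofCode, evalo, iha, ihb]; rfl
  | prec a b iha ihb => simp only [OCode.ofCode, evalo, iha, ihb]; rfl
  | rfind' a iha => simp only [OCode.ofCode, evalo, iha]; rfl

namespace TRed

variable {O f g : ℕ → ℕ}

theorem of_computable (hf : Computable f) : TRed f O := by
  obtain ⟨c, hc⟩ := exists_code.1 (Partrec.nat_iff.1 hf)
  exact ⟨OCode.ofCode c, by rw [evalo_ofCode, hc]⟩

theorem comp (hf : TRed f O) (hg : TRed g O) : TRed (fun n => f (g n)) O := by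
  obtain ⟨cf, hcf⟩ := hf
  obtain ⟨cg, hcg⟩ := hg
  exact ⟨.comp cf cg, funext fun n => by simp only [evalo, hcf, hcg]; exact Part.bind_some _ _⟩

theorem pair (hf : TRed f O) (hg : TRed g O) : TRed (fun n => Nat.pair (f n) (g n)) O := by
  obtain ⟨cf, hcf⟩ := hf
  obtain ⟨cg, hcg⟩ := hg
  exact ⟨.pair cf cg, funext fun n => by simp [evalo, hcf, hcg, Seq.seq]⟩

theorem comp₂ {h : ℕ → ℕ → ℕ} (hh : Computable₂ h) (hf : TRed f O) (hg : TRed g O) :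
    TRed (fun n => h (f n) (g n)) O := by
  have hh' : Computable fun p : ℕ => h p.unpair.1 p.unpair.2 :=
    hh.comp (Computable.fst.comp Computable.unpair) (Computable.snd.comp Computable.unpair)
  simpa using (of_computable hh').comp (hf.pair hg)

theorem prec (hf : TRed f O) (hg : TRed g O) :
    TRed (fun p => p.unpair.2.rec (f p.unpair.1)
      fun y IH => g (Nat.pair p.unpair.1 (Nat.pair y IH))) O := by
  obtain ⟨cf, hcf⟩ := hf
  obtain ⟨cg, hcg⟩ := hg
  refine ⟨.prec cf cg, funext fun p => ?_⟩
  simp only [evalo, Nat.unpaired, PFun.coe_val]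
  induction p.unpair.2 with
  | zero => simpa using congrFun hcf p.unpair.1
  | succ y ih =>
    simp only [ih]
    simpa using congrFun hcg _

theorem encode_map_range (hf : TRed f O) :
    TRed (fun n => Encodable.encode ((List.range n).map f)) O := by
  have happend : Computable₂ fun (p v : ℕ) =>
      Encodable.encode (Denumerable.ofNat (List ℕ) p.unpair.2.unpair.2 ++ [v]) :=
    (Primrec.encode.comp <| Primrec.list_concat.comp
      ((Primrec.ofNat _).comp (Primrec.snd.comp <| Primrec.unpair.comp <|
        Primrec.snd.comp <| Primrec.unpair.comp Primrec.fst))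
      Primrec.snd).to_comp
  have hstep := comp₂ happend (of_computable Computable.id)
    (hf.comp (of_computable (f := fun p => p.unpair.2.unpair.1)
      (Computable.fst.comp <| Computable.unpair.comp <| Computable.snd.comp Computable.unpair)))
  have hrec := (prec (of_computable (Computable.const 0)) hstep).comp
    (of_computable (f := Nat.pair 0) (Primrec₂.natPair.comp (Primrec.const 0) Primrec.id).to_comp)
  convert hrec using 2 with n
  simp only [Nat.unpair_pair, id]
  induction n with
  | zero => rfl
  | succ n ih => simp [List.range_succ, ← ih]

theorem comp_map_range {h : ℕ → List ℕ → ℕ} {a : ℕ → ℕ} (hh : Computable₂ h)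
    (ha : Computable a) (hf : TRed f O) :
    TRed (fun n => h n ((List.range (a n)).map f)) O := by
  have hh' : Computable₂ fun n m => h n (Denumerable.ofNat (List ℕ) m) :=
    hh.comp Computable.fst ((Primrec.ofNat _).to_comp.comp Computable.snd)
  simpa using comp₂ hh' (of_computable Computable.id)
    ((encode_map_range hf).comp (of_computable ha))

end TRed

def DominatesComputable (d : ℕ → ℕ) : Prop :=
  ∀ g : ℕ → ℕ, Computable g → ∀ᶠ i in atTop, g i ≤ d i

def IsListOfComputable (x : ℕ → ℕ) : Prop :=
  ∀ g : ℕ → ℕ, Computable g ↔ ∃ n, ∀ k, x (Nat.pair n k) = g k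

theorem dominatesComputable_sum_map_range {x : ℕ → ℕ}
    (hx : ∀ g : ℕ → ℕ, Computable g → ∃ n, ∀ k, x (Nat.pair n k) = g k) :
    DominatesComputable fun i => ((List.range ((i + 1) ^ 2)).map x).sum := by
  intro g hg
  obtain ⟨n, hn⟩ := hx g hg
  filter_upwards [eventually_ge_atTop n] with i hi
  rw [← hn i]
  refine List.le_sum_of_mem (List.mem_map_of_mem (List.mem_range.2 ?_))
  simpa [max_eq_right hi] using Nat.pair_lt_max_add_one_sq n i

theorem TRed.sum_map_range {x f : ℕ → ℕ} (hx : TRed x f) :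
    TRed (fun i => ((List.range ((i + 1) ^ 2)).map x).sum) f := by
  have hsum : Primrec (List.sum : List ℕ → ℕ) :=
    (Primrec.list_foldr Primrec.id (Primrec.const 0) (Primrec.nat_add.comp
      (Primrec.fst.comp Primrec.snd) (Primrec.snd.comp Primrec.snd)).to₂).of_eq
      fun l => by induction l <;> simp_all
  exact hx.comp_map_range (hsum.to_comp.comp Computable.snd).to₂
    ((Primrec.nat_mul.comp Primrec.succ Primrec.succ).of_eq fun i => (sq (i + 1)).symm).to_comp

theorem exists_tred_dominatesComputable_of_columns {x f : ℕ → ℕ} (hxf : TRed x f)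
    (hx : ∀ g : ℕ → ℕ, Computable g → ∃ n, ∀ k, x (Nat.pair n k) = g k) :
    ∃ d, TRed d f ∧ DominatesComputable d :=
  ⟨_, hxf.sum_map_range, dominatesComputable_sum_map_range hx⟩

def truncatedRun (fuel : ℕ → ℕ) (c : Code) (k : ℕ) : ℕ :=
  if ∀ j ≤ k, (evaln (fuel j) c j).isSome then (evaln (fuel k) c k).getD 0 else 0

theorem truncatedRun_congr {fuel fuel' : ℕ → ℕ} {c : Code} {k : ℕ}
    (h : ∀ j ≤ k, fuel j = fuel' j) : truncatedRun fuel c k = truncatedRun fuel' c k := by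
  unfold truncatedRun
  rw [h k le_rfl]
  congr 1
  exact propext (forall₂_congr fun j hj => by rw [h j hj])

theorem primrec_truncatedRun {α : Type*} [Primcodable α] {fuel : α → ℕ → ℕ} {c : α → Code}
    {k : α → ℕ} (hfuel : Primrec₂ fuel) (hc : Primrec c) (hk : Primrec k) :
    Primrec fun a => truncatedRun (fuel a) (c a) (k a) := by
  have hrun : Primrec₂ fun a j => evaln (fuel a j) (c a) j :=
    primrec_evaln.comp
      (Primrec.pair (Primrec.pair hfuel (hc.comp Primrec.fst)) Primrec.snd)
  have hhalts : PrimrecRel fun j a => (evaln (fuel a j) (c a) j).isSome = true :=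
    Primrec₂.primrecRel ((Primrec.option_isSome.comp (hrun.comp Primrec.snd Primrec.fst)).of_eq
      fun _ => by simp)
  have hall : PrimrecPred fun a => ∀ j ≤ k a, (evaln (fuel a j) (c a) j).isSome :=
    (hhalts.forall_mem_list.comp (Primrec.list_range.comp (Primrec.succ.comp hk)) Primrec.id).of_eq
      fun a => by simp
  exact Primrec.ite hall (Primrec.option_getD.comp (hrun.comp Primrec.id hk) (Primrec.const 0))
    (Primrec.const 0)

theorem computable_truncatedRun (fuel : ℕ → ℕ) (c : Code) : Computable (truncatedRun fuel c) := by
  by_cases hhalts : ∀ j, (evaln (fuel j) c j).isSome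
  · have hmem : ∀ k, truncatedRun fuel c k ∈ eval c k := fun k => by
      obtain ⟨v, hv⟩ := Option.isSome_iff_exists.1 (hhalts k)
      simpa [truncatedRun, hhalts, hv] using evaln_sound hv
    exact Partrec.nat_iff.2 (exists_code.2
      ⟨c, funext fun k => Part.eq_some_iff.2 (hmem k)⟩)
  · push Not at hhalts
    obtain ⟨k₀, hk₀⟩ := hhalts
    exact computable_of_forall_le_eq_zero k₀ fun k hk => by
      rw [truncatedRun, if_neg fun h => hk₀ (h k₀ hk)]

theorem truncatedRun_eq {fuel r g : ℕ → ℕ} {c : Code}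
    (hc : ∀ j t, r j ≤ t → evaln t c j = some (g j)) (hr : ∀ j, r j ≤ fuel j) :
    truncatedRun fuel c = g := by
  funext k
  simp [truncatedRun, hc _ _ (hr _)]

def listOfDominant (d : ℕ → ℕ) (n : ℕ) : ℕ :=
  truncatedRun (fun j => d j + (Denumerable.ofNat (Code × ℕ) n.unpair.1).2)
    (Denumerable.ofNat (Code × ℕ) n.unpair.1).1 n.unpair.2

theorem listOfDominant_pair (d : ℕ → ℕ) (n k : ℕ) :
    listOfDominant d (Nat.pair n k) =
      truncatedRun (fun j => d j + (Denumerable.ofNat (Code × ℕ) n).2)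
        (Denumerable.ofNat (Code × ℕ) n).1 k := by
  simp [listOfDominant]

theorem TRed.listOfDominant {d f : ℕ → ℕ} (hd : TRed d f) : TRed (listOfDominant d) f := by
  have hcol : Primrec fun n : ℕ => Denumerable.ofNat (Code × ℕ) n.unpair.1 :=
    (Primrec.ofNat _).comp (Primrec.fst.comp Primrec.unpair)
  have hrun : Computable₂ fun (n : ℕ) (ds : List ℕ) =>
      truncatedRun (fun j => ds.getD j 0 + (Denumerable.ofNat (Code × ℕ) n.unpair.1).2)
        (Denumerable.ofNat (Code × ℕ) n.unpair.1).1 n.unpair.2 :=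
    (primrec_truncatedRun
      (Primrec.nat_add.comp₂ ((Primrec.list_getD 0).comp₂ (Primrec.snd.comp₂ Primrec₂.left)
        Primrec₂.right) ((Primrec.snd.comp (hcol.comp Primrec.fst)).comp₂ Primrec₂.left))
      (Primrec.fst.comp (hcol.comp Primrec.fst))
      (Primrec.snd.comp (Primrec.unpair.comp Primrec.fst))).to_comp
  convert hd.comp_map_range hrun (Primrec.succ.comp (Primrec.snd.comp Primrec.unpair)).to_comp
    using 2 with n
  refine truncatedRun_congr fun j hj => ?_
  simp [Nat.lt_succ_of_le hj]

theorem isListOfComputable_listOfDominant {d : ℕ → ℕ} (hd : DominatesComputable d) :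
    IsListOfComputable (listOfDominant d) := by
  intro g
  constructor
  · intro hg
    obtain ⟨c, r, hr, hc⟩ := hg.exists_code_evaln_eq_some
    obtain ⟨s, hs⟩ := exists_le_add_of_eventually_le (hd r hr)
    refine ⟨Encodable.encode (c, s), fun k => ?_⟩
    rw [listOfDominant_pair, Denumerable.ofNat_encode, truncatedRun_eq hc hs]
  · rintro ⟨n, hn⟩
    exact (computable_truncatedRun _ _).of_eq fun k => (listOfDominant_pair d n k).symm.trans (hn k)

end Paper

/-- any `f` computing a list of the computable functions computes a
function dominating every computable function; hence `dom(REC) = list(REC)`. -/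
theorem list_computes_dominating_and_dom_eq_list :
    (∀ f x : ℕ → ℕ, Paper.TRed x f →
      (∀ g : ℕ → ℕ, Computable g ↔ ∃ n, ∀ k, x (Nat.pair n k) = g k) →
      ∃ d : ℕ → ℕ, Paper.TRed d f ∧
        ∀ g : ℕ → ℕ, Computable g → ∀ᶠ i in Filter.atTop, g i ≤ d i) ∧
    {f : ℕ → ℕ | ∃ d : ℕ → ℕ, Paper.TRed d f ∧
        ∀ g : ℕ → ℕ, Computable g → ∀ᶠ i in Filter.atTop, g i ≤ d i} =
      {f : ℕ → ℕ | ∃ x : ℕ → ℕ, Paper.TRed x f ∧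
        ∀ g : ℕ → ℕ, Computable g ↔ ∃ n, ∀ k, x (Nat.pair n k) = g k} := by
  have list_to_dom : ∀ f x : ℕ → ℕ, Paper.TRed x f → Paper.IsListOfComputable x →
      ∃ d, Paper.TRed d f ∧ Paper.DominatesComputable d := fun _ _ hxf hx =>
    Paper.exists_tred_dominatesComputable_of_columns hxf fun g => (hx g).1
  refine ⟨list_to_dom, Set.ext fun f => ⟨?_, fun ⟨x, hxf, hx⟩ => list_to_dom f x hxf hx⟩⟩
  rintro ⟨d, hdf, hd⟩
  exact ⟨_, hdf.listOfDominant, Paper.isListOfComputable_listOfDominant hd⟩
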